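/- Expected one-step variance decrease for pairwise midpoint gossip in CAT(0): Let G be a finite connected graph on N vertices, (M,d) a complete CAT(0) space, and x ∈ M^V a configuration. Suppose an unordered edge {v,w} is selected at random with probability P({v,w}) = (1/N)(deg(v)⁻¹ + deg(w)⁻¹), and both x_v, x_w are replaced by their midpoint m (other coordinates unchanged), yielding the random configuration X'. Then E[σ²(X')] − σ²(x) ≤ −(1/2)·(1/N)·Δ(x), where σ²(x) = (1/N) Σ_{{u,u'}∈P₂(V)} d²(x_u, x_{u'}) and Δ(x) = Σ_{v∼w} (deg(v)⁻¹ + deg(w)⁻¹) d²(x_v, x_w). -/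

import Mathlib

open Finset

/-- The variance function `σ²(x) = (1/N) Σ_{{u,u'} ∈ P₂(V)} d²(x_u, x_{u'})`
(written as half the sum over ordered pairs). -/
noncomputable def sigma2 {V M : Type*} [Fintype V] [DecidableEq V] [MetricSpace M]
    (x : V → M) : ℝ :=
  (Fintype.card V : ℝ)⁻¹ *
    ((1 / 2 : ℝ) * ∑ v : V, ∑ w : V, if v ≠ w then dist (x v) (x w) ^ 2 else 0)

/-- The disagreement function `Δ(x) = Σ_{v∼w} (deg v⁻¹ + deg w⁻¹) d²(x_v, x_w)`
(written as half the sum over ordered adjacent pairs). -/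
noncomputable def disag {V M : Type*} [Fintype V] [MetricSpace M] (G : SimpleGraph V)
    [DecidableRel G.Adj] (x : V → M) : ℝ :=
  (1 / 2 : ℝ) * ∑ v : V, ∑ w : V,
    if G.Adj v w then ((G.degree v : ℝ)⁻¹ + (G.degree w : ℝ)⁻¹) * dist (x v) (x w) ^ 2
    else 0

/-- The configuration after agents `v` and `w` move to the midpoint of their values. -/
def updateConfig {V M : Type*} [DecidableEq V] (x : V → M) (mid : M → M → M) (v w : V) :
    V → M :=
  fun u => if u = v ∨ u = w then mid (x v) (x w) else x u

/-!
Fix an edge `{v, w}` with midpoint `m` and put `D = d²(x_v, x_w)`. Summing the CAT(0) inequality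
`2 d²(m, u) ≤ d²(x_v, u) + d²(x_w, u) − D / 2` over the points `u` of a configuration, once for
the old and once for the new configuration, shows that the midpoint move lowers
`Σ_{u,u'} d²(x_u, x_{u'})` by at least `N D`, that is, lowers `σ²` by at least `D / 2`.
Averaging over the edge distribution, whose total mass is at most one, and using `σ² ≥ 0`
gives the bound.
-/

section Update

variable {V M : Type*} [Fintype V] [DecidableEq V]

lemma sum_comp_updateConfig_add {R : Type*} [CommRing R] (x : V → M) (mid : M → M → M)
    {v w : V} (hvw : v ≠ w) (h : M → R) :
    ∑ u, h (updateConfig x mid v w u) + h (x v) + h (x w) =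
      ∑ u, h (x u) + 2 * h (mid (x v) (x w)) := by
  have hpt : ∀ u, h (updateConfig x mid v w u) =
      h (x u) + (if v = u then h (mid (x v) (x w)) - h (x v) else 0) +
        (if w = u then h (mid (x v) (x w)) - h (x w) else 0) := by
    intro u
    unfold updateConfig
    by_cases huv : u = v <;> by_cases huw : u = w <;> simp_all [eq_comm]
  simp only [hpt, sum_add_distrib, sum_ite_eq, mem_univ, if_true]
  ring

end Update

section Variance

variable {V M : Type*} [Fintype V] [MetricSpace M]

noncomputable def sumSqDist (z : V → M) (p : M) : ℝ :=
  ∑ u, dist p (z u) ^ 2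

lemma two_mul_sumSqDist_mid_le (mid : M → M → M)
    (hcat : ∀ a b u : M,
      2 * dist (mid a b) u ^ 2 ≤ dist a u ^ 2 + dist b u ^ 2 - dist a b ^ 2 / 2)
    (z : V → M) (a b : M) :
    2 * sumSqDist z (mid a b) ≤
      sumSqDist z a + sumSqDist z b - Fintype.card V * (dist a b ^ 2 / 2) := by
  simp only [sumSqDist, mul_sum, ← sum_add_distrib, ← card_univ, ← nsmul_eq_mul,
    ← sum_const, ← sum_sub_distrib]
  exact sum_le_sum fun u _ => hcat a b (z u)

lemma sum_sumSqDist_comm (y z : V → M) :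
    ∑ u, sumSqDist y (z u) = ∑ u, sumSqDist z (y u) := by
  simp only [sumSqDist]
  rw [sum_comm]
  simp only [dist_comm]

variable [DecidableEq V]

lemma sigma2_eq_sum_sumSqDist (x : V → M) :
    sigma2 x = (Fintype.card V : ℝ)⁻¹ * ((1 / 2 : ℝ) * ∑ u, sumSqDist x (x u)) := by
  unfold sigma2 sumSqDist
  congr 3 with v
  refine sum_congr rfl fun w _ => ?_
  by_cases h : v = w <;> simp [h]

lemma sigma2_nonneg (x : V → M) : 0 ≤ sigma2 x := by
  rw [sigma2_eq_sum_sumSqDist]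
  unfold sumSqDist
  positivity

lemma sum_sumSqDist_updateConfig_le (x : V → M) (mid : M → M → M)
    (hcat : ∀ a b u : M,
      2 * dist (mid a b) u ^ 2 ≤ dist a u ^ 2 + dist b u ^ 2 - dist a b ^ 2 / 2)
    {v w : V} (hvw : v ≠ w) :
    ∑ u, sumSqDist (updateConfig x mid v w) (updateConfig x mid v w u) ≤
      ∑ u, sumSqDist x (x u) - Fintype.card V * dist (x v) (x w) ^ 2 := by
  set y := updateConfig x mid v w
  have hy := sum_comp_updateConfig_add x mid hvw (sumSqDist y)
  have hx := sum_comp_updateConfig_add x mid hvw (sumSqDist x)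
  have hyx := two_mul_sumSqDist_mid_le mid hcat y (x v) (x w)
  have hxx := two_mul_sumSqDist_mid_le mid hcat x (x v) (x w)
  rw [sum_sumSqDist_comm y x] at hy
  linarith

lemma sigma2_updateConfig_le (x : V → M) (mid : M → M → M)
    (hcat : ∀ a b u : M,
      2 * dist (mid a b) u ^ 2 ≤ dist a u ^ 2 + dist b u ^ 2 - dist a b ^ 2 / 2)
    {v w : V} (hvw : v ≠ w) :
    sigma2 (updateConfig x mid v w) ≤ sigma2 x - dist (x v) (x w) ^ 2 / 2 := by
  have hN : (0 : ℝ) < Fintype.card V := by exact_mod_cast Fintype.card_pos_iff.mpr ⟨v⟩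
  have hsum := sum_sumSqDist_updateConfig_le x mid hcat hvw
  rw [sigma2_eq_sum_sumSqDist, sigma2_eq_sum_sumSqDist]
  calc _ ≤ (Fintype.card V : ℝ)⁻¹ *
        ((1 / 2 : ℝ) * (∑ u, sumSqDist x (x u) - Fintype.card V * dist (x v) (x w) ^ 2)) := by
        gcongr
    _ = _ := by field_simp

end Variance

section Graph

variable {V : Type*} [Fintype V] (G : SimpleGraph V) [DecidableRel G.Adj]

lemma sum_sum_adj_swap {R : Type*} [AddCommMonoid R] (f : V → V → R) :
    ∑ v, ∑ w, (if G.Adj v w then f w v else 0) = ∑ v, ∑ w, (if G.Adj v w then f v w else 0) := by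
  rw [sum_comm]
  simp only [G.adj_comm]

lemma sum_sum_adj_inv_degree_le_card :
    ∑ v, ∑ w, (if G.Adj v w then (G.degree v : ℝ)⁻¹ else 0) ≤ Fintype.card V := by
  calc _ = ∑ v, (G.degree v : ℝ) * (G.degree v : ℝ)⁻¹ := by
        refine sum_congr rfl fun v _ => ?_
        rw [← sum_filter, ← G.neighborFinset_eq_filter, sum_const, nsmul_eq_mul,
          G.card_neighborFinset_eq_degree]
    _ ≤ ∑ _v : V, (1 : ℝ) := sum_le_sum fun v _ => mul_inv_le_one
    _ = Fintype.card V := by simp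

/-- Equality holds unless `G` has an isolated vertex, whose `deg⁻¹` is the junk value `0`. -/
lemma sum_edge_prob_le_one :
    (1 / 2 : ℝ) * ∑ v, ∑ w, (if G.Adj v w then
      (Fintype.card V : ℝ)⁻¹ * ((G.degree v : ℝ)⁻¹ + (G.degree w : ℝ)⁻¹) else 0) ≤ 1 := by
  have hsplit : ∀ v w, (if G.Adj v w then
      (Fintype.card V : ℝ)⁻¹ * ((G.degree v : ℝ)⁻¹ + (G.degree w : ℝ)⁻¹) else 0) =
      (Fintype.card V : ℝ)⁻¹ * ((if G.Adj v w then (G.degree v : ℝ)⁻¹ else 0) +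
        (if G.Adj v w then (G.degree w : ℝ)⁻¹ else 0)) := by
    intro v w
    split_ifs <;> simp
  simp only [hsplit, ← mul_sum, sum_add_distrib]
  rw [sum_sum_adj_swap G (fun v _ => (G.degree v : ℝ)⁻¹)]
  calc _ = (Fintype.card V : ℝ)⁻¹ *
        ∑ v, ∑ w, (if G.Adj v w then (G.degree v : ℝ)⁻¹ else 0) := by ring
    _ ≤ (Fintype.card V : ℝ)⁻¹ * Fintype.card V := by
        gcongr
        exact sum_sum_adj_inv_degree_le_card G
    _ ≤ 1 := by rw [mul_comm]; exact mul_inv_le_one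

end Graph

theorem stmt_14_general {V : Type*} [Fintype V] [DecidableEq V] (G : SimpleGraph V)
    [DecidableRel G.Adj]
    {M : Type*} [MetricSpace M] (x : V → M)
    (mid : M → M → M)
    (hcat : ∀ a b u : M,
      2 * dist (mid a b) u ^ 2 ≤ dist a u ^ 2 + dist b u ^ 2 - dist a b ^ 2 / 2) :
    ((1 / 2 : ℝ) * ∑ v : V, ∑ w : V,
        (if G.Adj v w then
          (Fintype.card V : ℝ)⁻¹ * ((G.degree v : ℝ)⁻¹ + (G.degree w : ℝ)⁻¹) *
            sigma2 (updateConfig x mid v w)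
        else 0)) - sigma2 x
      ≤ -(1 / 2 : ℝ) * (Fintype.card V : ℝ)⁻¹ * disag G x := by
  have hexpand : (1 / 2 : ℝ) * ∑ v, ∑ w, (if G.Adj v w then
      (Fintype.card V : ℝ)⁻¹ * ((G.degree v : ℝ)⁻¹ + (G.degree w : ℝ)⁻¹) *
        (sigma2 x - dist (x v) (x w) ^ 2 / 2) else 0) =
      ((1 / 2 : ℝ) * ∑ v, ∑ w, (if G.Adj v w then
        (Fintype.card V : ℝ)⁻¹ * ((G.degree v : ℝ)⁻¹ + (G.degree w : ℝ)⁻¹) else 0)) * sigma2 x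
        - (1 / 2 : ℝ) * (Fintype.card V : ℝ)⁻¹ * disag G x := by
    unfold disag
    simp only [mul_sum, sum_mul, ← sum_sub_distrib]
    refine sum_congr rfl fun v _ => sum_congr rfl fun w _ => ?_
    split_ifs <;> ring
  calc _ ≤ (1 / 2 : ℝ) * ∑ v, ∑ w, (if G.Adj v w then
        (Fintype.card V : ℝ)⁻¹ * ((G.degree v : ℝ)⁻¹ + (G.degree w : ℝ)⁻¹) *
          (sigma2 x - dist (x v) (x w) ^ 2 / 2) else 0) - sigma2 x := by
        gcongr with v _ w _
        split_ifs with hvw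
        · exact mul_le_mul_of_nonneg_left (sigma2_updateConfig_le x mid hcat hvw.ne)
            (by positivity)
        · rfl
    _ ≤ _ := by
        rw [hexpand]
        nlinarith [sum_edge_prob_le_one G, sigma2_nonneg x]

/-- Expected one-step variance decrease for pairwise midpoint gossip in a complete CAT(0)
space: `E[σ²(X')] − σ²(x) ≤ −(1/(2N)) Δ(x)`, the expectation being over the random
unordered edge `{v,w}`, chosen with probability `(1/N)(deg v⁻¹ + deg w⁻¹)`. -/
theorem stmt_14 {V : Type*} [Fintype V] [DecidableEq V] (G : SimpleGraph V)
    [DecidableRel G.Adj] (hG : G.Connected)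
    {M : Type*} [MetricSpace M] [CompleteSpace M] (x : V → M)
    (mid : M → M → M)
    (hmid : ∀ a b : M, dist a (mid a b) = dist a b / 2 ∧ dist b (mid a b) = dist a b / 2)
    (hmid_symm : ∀ a b : M, mid a b = mid b a)
    (hcat : ∀ a b u : M,
      2 * dist (mid a b) u ^ 2 ≤ dist a u ^ 2 + dist b u ^ 2 - dist a b ^ 2 / 2) :
    ((1 / 2 : ℝ) * ∑ v : V, ∑ w : V,
        (if G.Adj v w then
          (Fintype.card V : ℝ)⁻¹ * ((G.degree v : ℝ)⁻¹ + (G.degree w : ℝ)⁻¹) *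
            sigma2 (updateConfig x mid v w)
        else 0)) - sigma2 x
      ≤ -(1 / 2 : ℝ) * (Fintype.card V : ℝ)⁻¹ * disag G x :=
  stmt_14_general G x mid hcat
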